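/- arXiv:1812.07338 — 5 statements merged into one kernel-verified Lean document; each statement's English description precedes it below -/
import Mathlib

section
/- For b ∈ (0,1), there exists exactly one β ∈ (0, -2 ln b) such that g(β) = 0, where g(t) = -(1/(2 ln b)) · t(1 - b²eᵗ)eᵗ + (1/(4b² ln² b)) · (b²teᵗ + (1 - b²eᵗ))² - eᵗ; moreover g(t) > 0 on [0, β) and g(t) < 0 on (β, -2 ln b). -/
set_option maxHeartbeats 1000000
open Set Real

/-- Sign-change lemma: f goes strictly up on [a,m], strictly down on [m,c],
    starts negative, ends at 0. -/
lemma my_sign_change {f : ℝ → ℝ} {a m c : ℝ} (ham : a < m) (hmc : m < c)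
    (hcont : ContinuousOn f (Icc a m))
    (hmono : StrictMonoOn f (Icc a m)) (hanti : StrictAntiOn f (Icc m c))
    (hfa : f a < 0) (hfc : f c = 0) :
    ∃ z ∈ Ioo a m, f z = 0 ∧ (∀ s ∈ Ico a z, f s < 0) ∧ (∀ s ∈ Ioo z c, 0 < f s) := by
  have hfm : 0 < f m := by
    have := hanti (left_mem_Icc.2 hmc.le) (right_mem_Icc.2 hmc.le) hmc
    linarith [hfc ▸ this]
  obtain ⟨z, hz, hfz⟩ := intermediate_value_Ioo ham.le hcont
    (show (0:ℝ) ∈ Ioo (f a) (f m) from ⟨hfa, hfm⟩)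
  refine ⟨z, hz, hfz, ?_, ?_⟩
  · intro s hs
    have := hmono (⟨hs.1, (hs.2.trans hz.2).le⟩ : s ∈ Icc a m) ⟨hz.1.le, hz.2.le⟩ hs.2
    linarith [hfz ▸ this]
  · intro s hs
    rcases le_or_gt s m with h | h
    · have := hmono (⟨hz.1.le, hz.2.le⟩ : z ∈ Icc a m) ⟨(hz.1.trans hs.1).le, h⟩ hs.1
      linarith [hfz ▸ this]
    · have := hanti (⟨h.le, hs.2.le⟩ : s ∈ Icc m c) (right_mem_Icc.2 (h.le.trans hs.2.le)) hs.2
      linarith [hfc ▸ this]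

noncomputable def myr2 (L : ℝ) : ℝ := (2*L - 3 + Real.sqrt (4*L^2 - 8*L + 9))/2

lemma myq_facts {L : ℝ} (hL : L < 0) :
    2*L < myr2 L ∧ myr2 L < 0 ∧
    (∀ s, 2*L ≤ s → s < myr2 L → s^2 + (3-2*L)*s - L < 0) ∧
    (∀ s, 2*L ≤ s → myr2 L < s → 0 < s^2 + (3-2*L)*s - L) := by
  have hD : (0:ℝ) < 4*L^2 - 8*L + 9 := by nlinarith
  set d := Real.sqrt (4*L^2 - 8*L + 9) with hd
  have hd2 : d^2 = 4*L^2 - 8*L + 9 := Real.sq_sqrt hD.le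
  have hd0 : 0 ≤ d := Real.sqrt_nonneg _
  have h1 : 2*L + 3 < d := by nlinarith [sq_nonneg (d - (2*L+3)), sq_nonneg (d + (2*L+3))]
  have h2 : d < 3 - 2*L := by nlinarith
  have hroot : (myr2 L)^2 + (3-2*L)*(myr2 L) - L = 0 := by
    simp only [myr2]; rw [← hd]; field_simp; nlinarith
  have h3 : -(2*L + 3) < d := by nlinarith
  have hr3 : -3 < myr2 L := by simp only [myr2]; linarith
  refine ⟨by simp only [myr2]; linarith, by simp only [myr2]; linarith, ?_, ?_⟩
  · intro s hs1 hs2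
    nlinarith [hroot]
  · intro s hs1 hs2
    nlinarith [hroot]

noncomputable def myphi (L s : ℝ) : ℝ :=
  Real.exp s * (s^2 - (2*L+1)*s + 3*L) + (1-L)*s - 3*L

noncomputable def myphi' (L s : ℝ) : ℝ :=
  Real.exp s * (s^2 - (2*L-1)*s + (L-1)) + (1-L)

lemma hasDerivAt_myphi (L s : ℝ) : HasDerivAt (myphi L) (myphi' L s) s := by
  have h1 : HasDerivAt (fun x : ℝ => x^2 - (2*L+1)*x + 3*L) (2*s - (2*L+1)) s := by
    simpa using ((hasDerivAt_pow 2 s).sub ((hasDerivAt_id s).const_mul (2*L+1))).add_const (3*L)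
  have heq : myphi L = fun x : ℝ =>
      Real.exp x * (x^2 - (2*L+1)*x + 3*L) + ((1-L) * id x - 3*L) := by
    funext x; simp only [myphi, id]; ring
  rw [heq, show myphi' L s = Real.exp s * (s^2 - (2*L+1)*s + 3*L) +
      Real.exp s * (2*s - (2*L+1)) + (1-L)*1 by simp only [myphi']; ring]
  exact ((Real.hasDerivAt_exp s).mul h1).add
    (((hasDerivAt_id s).const_mul (1-L)).sub_const (3*L))

lemma hasDerivAt_myphi' (L s : ℝ) :
    HasDerivAt (myphi' L) (Real.exp s * (s^2 + (3-2*L)*s - L)) s := by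
  have h1 : HasDerivAt (fun x : ℝ => x^2 - (2*L-1)*x + (L-1)) (2*s - (2*L-1)) s := by
    simpa using ((hasDerivAt_pow 2 s).sub ((hasDerivAt_id s).const_mul (2*L-1))).add_const (L-1)
  have h2 := ((Real.hasDerivAt_exp s).mul h1).add_const (1-L)
  refine h2.congr_deriv (Eq.symm ?_)
  ring

lemma cont_myphi (L : ℝ) : Continuous (myphi L) := by
  unfold myphi; continuity

lemma cont_myphi' (L : ℝ) : Continuous (myphi' L) := by
  unfold myphi'; continuity

lemma my_sinh (x : ℝ) (hx : 0 < x) : 2*x < Real.exp x - Real.exp (-x) := by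
  set f : ℝ → ℝ := fun y => Real.exp y - Real.exp (-y) - 2*y with hf
  have hderiv : ∀ y : ℝ, HasDerivAt f (Real.exp y + Real.exp (-y) - 2) y := by
    intro y
    have h1 : HasDerivAt (fun y : ℝ => Real.exp (-y)) (Real.exp (-y) * (-1)) y :=
      (Real.hasDerivAt_exp (-y)).comp y (hasDerivAt_neg y)
    have := ((Real.hasDerivAt_exp y).sub h1).sub ((hasDerivAt_id y).const_mul 2)
    refine this.congr_deriv (Eq.symm ?_)
    simp
  have hmono : StrictMonoOn f (Ici 0) := by
    apply strictMonoOn_of_deriv_pos (convex_Ici 0)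
    · exact Continuous.continuousOn (by fun_prop)
    · intro y hy
      rw [interior_Ici] at hy
      rw [(hderiv y).deriv]
      have h1 := Real.add_one_lt_exp (show y ≠ 0 from ne_of_gt hy)
      have h2 : Real.exp y * Real.exp (-y) = 1 := by
        rw [← Real.exp_add]; simp
      have hy' : (0:ℝ) < y := hy
      have h3 : 0 < (Real.exp y - 1)^2 := pow_pos (by linarith) 2
      nlinarith [Real.exp_pos y, Real.exp_pos (-y), mul_pos h3 (Real.exp_pos (-y))]
  have := hmono (self_mem_Ici) (show x ∈ Ici (0:ℝ) from hx.le) hx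
  simp only [hf] at this
  simp at this
  linarith

theorem stmt_7 (b : ℝ) (hb0 : 0 < b) (hb1 : b < 1) :
    ∃ β ∈ Set.Ioo (0 : ℝ) (-2 * Real.log b),
      (fun t : ℝ => -(1 / (2 * Real.log b)) * (t * (1 - b ^ 2 * Real.exp t) * Real.exp t)
          + (1 / (4 * b ^ 2 * (Real.log b) ^ 2)) *
            (b ^ 2 * t * Real.exp t + (1 - b ^ 2 * Real.exp t)) ^ 2
          - Real.exp t) β = 0 ∧
      (∀ β' ∈ Set.Ioo (0 : ℝ) (-2 * Real.log b),
        (fun t : ℝ => -(1 / (2 * Real.log b)) * (t * (1 - b ^ 2 * Real.exp t) * Real.exp t)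
            + (1 / (4 * b ^ 2 * (Real.log b) ^ 2)) *
              (b ^ 2 * t * Real.exp t + (1 - b ^ 2 * Real.exp t)) ^ 2
            - Real.exp t) β' = 0 → β' = β) ∧
      (∀ t ∈ Set.Ico (0 : ℝ) β,
        (fun t : ℝ => -(1 / (2 * Real.log b)) * (t * (1 - b ^ 2 * Real.exp t) * Real.exp t)
            + (1 / (4 * b ^ 2 * (Real.log b) ^ 2)) *
              (b ^ 2 * t * Real.exp t + (1 - b ^ 2 * Real.exp t)) ^ 2
            - Real.exp t) t > 0) ∧
      (∀ t ∈ Set.Ioo β (-2 * Real.log b),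
        (fun t : ℝ => -(1 / (2 * Real.log b)) * (t * (1 - b ^ 2 * Real.exp t) * Real.exp t)
            + (1 / (4 * b ^ 2 * (Real.log b) ^ 2)) *
              (b ^ 2 * t * Real.exp t + (1 - b ^ 2 * Real.exp t)) ^ 2
            - Real.exp t) t < 0) := by
  set L := Real.log b with hLdef
  have hL : L < 0 := Real.log_neg hb0 hb1
  have hL0 : L ≠ 0 := ne_of_lt hL
  have hb0' : b ≠ 0 := ne_of_gt hb0
  have hbL : Real.exp L = b := Real.exp_log hb0
  have hb2 : Real.exp (2*L) = b^2 := by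
    rw [two_mul, Real.exp_add, hbL]; ring
  set G : ℝ → ℝ := fun t : ℝ =>
      -(1 / (2 * L)) * (t * (1 - b ^ 2 * Real.exp t) * Real.exp t)
        + (1 / (4 * b ^ 2 * L ^ 2)) *
          (b ^ 2 * t * Real.exp t + (1 - b ^ 2 * Real.exp t)) ^ 2
        - Real.exp t with hGdef
  -- derivative of G
  have hGderiv : ∀ t : ℝ, HasDerivAt G (Real.exp t / (2*L^2) * myphi L (t + 2*L)) t := by
    intro t
    have hA : HasDerivAt (fun t : ℝ => 1 - b^2 * Real.exp t) (-(b^2 * Real.exp t)) t := by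
      simpa using ((Real.hasDerivAt_exp t).const_mul (b^2)).const_sub 1
    have h1 : HasDerivAt (fun t : ℝ => t * (1 - b ^ 2 * Real.exp t) * Real.exp t)
        ((1 * (1 - b^2 * Real.exp t) + t * (-(b^2 * Real.exp t))) * Real.exp t
          + t * (1 - b^2 * Real.exp t) * Real.exp t) t :=
      (((hasDerivAt_id t).mul hA).mul (Real.hasDerivAt_exp t))
    have hin : HasDerivAt (fun t : ℝ => b ^ 2 * t * Real.exp t + (1 - b ^ 2 * Real.exp t))
        ((b^2 * 1) * Real.exp t + (b^2 * t) * Real.exp t + (-(b^2 * Real.exp t))) t := by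
      have := (((hasDerivAt_id t).const_mul (b^2)).mul (Real.hasDerivAt_exp t)).add hA
      refine this.congr_deriv (Eq.symm ?_)
      simp
    have h2 := hin.pow 2
    have h3 := ((h1.const_mul (-(1 / (2 * L)))).add (h2.const_mul (1 / (4 * b ^ 2 * L ^ 2)))).sub
      (Real.hasDerivAt_exp t)
    have hGeq : G = fun t : ℝ =>
        -(1 / (2 * L)) * (t * (1 - b ^ 2 * Real.exp t) * Real.exp t)
          + (1 / (4 * b ^ 2 * L ^ 2)) * (b ^ 2 * t * Real.exp t + (1 - b ^ 2 * Real.exp t)) ^ 2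
          - Real.exp t := rfl
    rw [hGeq]
    refine h3.congr_deriv (Eq.symm ?_)
    simp only [myphi]
    rw [Real.exp_add, hb2]
    field_simp
    ring
  have hcontG : Continuous G := by
    rw [hGdef]; continuity
  -- facts about q/r2
  obtain ⟨hr2a, hr2b, hqneg, hqpos⟩ := myq_facts hL
  -- phi' endpoint values
  have hphi'2L : 0 < myphi' L (2*L) := by
    simp only [myphi', hb2]
    have hb2pos : (0:ℝ) < b^2 := by positivity
    have h1 := Real.add_one_lt_exp (show (-(2*L)) ≠ 0 by simp [hL0])
    have hE : Real.exp (-(2*L)) = (b^2)⁻¹ := by rw [Real.exp_neg, hb2]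
    rw [hE] at h1
    have h2 : b^2 * (1 - 2*L) < 1 := by
      have := mul_lt_mul_of_pos_left h1 hb2pos
      rw [mul_inv_cancel₀ (ne_of_gt hb2pos)] at this
      linarith
    nlinarith [mul_pos (show (0:ℝ) < 1 - L by linarith)
      (show (0:ℝ) < 1 - b^2*(1-2*L) by linarith), mul_pos (mul_pos hb2pos (mul_pos
      (show (0:ℝ) < -L by linarith) (show (0:ℝ) < -L by linarith))) (by norm_num : (0:ℝ) < 1)]
  have hphi'0 : myphi' L 0 = 0 := by simp only [myphi', Real.exp_zero]; ring
  -- phi' monotonicity pieces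
  have hphi'anti : StrictAntiOn (myphi' L) (Icc (2*L) (myr2 L)) := by
    apply strictAntiOn_of_deriv_neg (convex_Icc _ _) (cont_myphi' L).continuousOn
    intro x hx
    rw [interior_Icc] at hx
    rw [(hasDerivAt_myphi' L x).deriv]
    have := hqneg x hx.1.le hx.2
    nlinarith [Real.exp_pos x]
  have hphi'mono : StrictMonoOn (myphi' L) (Icc (myr2 L) 0) := by
    apply strictMonoOn_of_deriv_pos (convex_Icc _ _) (cont_myphi' L).continuousOn
    intro x hx
    rw [interior_Icc] at hx
    rw [(hasDerivAt_myphi' L x).deriv]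
    have := hqpos x (by linarith [hx.1]) hx.1
    nlinarith [Real.exp_pos x]
  -- sign change of phi' : obtain s₁
  obtain ⟨s1, hs1mem, hs1zero, hs1neg, hs1pos⟩ :=
    my_sign_change (f := fun s => -(myphi' L s)) hr2a hr2b
      ((cont_myphi' L).neg.continuousOn)
      (fun x hx y hy hxy => neg_lt_neg (hphi'anti hx hy hxy))
      (fun x hx y hy hxy => neg_lt_neg (hphi'mono hx hy hxy))
      (neg_lt_zero.mpr hphi'2L) (by simp [hphi'0])
  -- phi monotonicity pieces
  have hphimono : StrictMonoOn (myphi L) (Icc (2*L) s1) := by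
    apply strictMonoOn_of_deriv_pos (convex_Icc _ _) (cont_myphi L).continuousOn
    intro x hx
    rw [interior_Icc] at hx
    rw [(hasDerivAt_myphi L x).deriv]
    have := hs1neg x ⟨hx.1.le, hx.2⟩
    simp only [neg_lt, neg_zero] at this
    exact this
  have hphianti : StrictAntiOn (myphi L) (Icc s1 0) := by
    apply strictAntiOn_of_deriv_neg (convex_Icc _ _) (cont_myphi L).continuousOn
    intro x hx
    rw [interior_Icc] at hx
    rw [(hasDerivAt_myphi L x).deriv]
    have := hs1pos x hx
    simp only [lt_neg, neg_zero] at this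
    exact this
  -- phi endpoint values
  have hphi2L : myphi L (2*L) < 0 := by
    simp only [myphi, hb2]
    have h1 := Real.add_one_lt_exp (show (2*L) ≠ 0 by simp [hL0])
    rw [hb2] at h1
    nlinarith [mul_pos (neg_pos.mpr hL) (show (0:ℝ) < b^2 - 1 - 2*L by linarith)]
  have hphi0 : myphi L 0 = 0 := by
    simp [myphi]
  -- sign change of phi : obtain sm
  have hs10 : s1 < 0 := hs1mem.2.trans hr2b
  obtain ⟨sm, hsmmem, hsmzero, hsmneg, hsmpos⟩ :=
    my_sign_change (f := myphi L) hs1mem.1 hs10 (cont_myphi L).continuousOn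
      hphimono hphianti hphi2L hphi0
  -- G monotonicity pieces
  set tm : ℝ := sm - 2*L with htmdef
  have htm0 : 0 < tm := by simp only [htmdef]; linarith [hsmmem.1]
  have htmT : tm < -2*L := by simp only [htmdef]; linarith [hsmmem.2.trans hs10]
  have hGanti : StrictAntiOn G (Icc 0 tm) := by
    apply strictAntiOn_of_deriv_neg (convex_Icc _ _) hcontG.continuousOn
    intro x hx
    rw [interior_Icc] at hx
    rw [(hGderiv x).deriv]
    have hφ : myphi L (x + 2*L) < 0 := hsmneg (x + 2*L)
      ⟨by linarith [hx.1], by simp only [htmdef] at hx; linarith [hx.2]⟩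
    have hc : 0 < Real.exp x / (2*L^2) := by positivity
    exact mul_neg_of_pos_of_neg hc hφ
  have hGmono : StrictMonoOn G (Icc tm (-2*L)) := by
    apply strictMonoOn_of_deriv_pos (convex_Icc _ _) hcontG.continuousOn
    intro x hx
    rw [interior_Icc] at hx
    rw [(hGderiv x).deriv]
    have hφ : 0 < myphi L (x + 2*L) := hsmpos (x + 2*L)
      ⟨by simp only [htmdef] at hx; linarith [hx.1], by linarith [hx.2]⟩
    have hc : 0 < Real.exp x / (2*L^2) := by positivity
    exact mul_pos hc hφ
  -- G endpoint values
  have hG0 : 0 < G 0 := by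
    have hs := my_sinh (-L) (by linarith)
    rw [show -(-L) = L by ring, Real.exp_neg, hbL] at hs
    have hkey : -(2*L)*b < 1 - b^2 := by
      have h := mul_lt_mul_of_pos_right hs hb0
      rw [sub_mul, inv_mul_cancel₀ hb0'] at h
      nlinarith
    have hkey0 : 0 < -(2*L)*b := by
      have hmL : 0 < -L := by linarith
      nlinarith [mul_pos hmL hb0]
    have hsq : 4*b^2*L^2 < (1-b^2)^2 := by nlinarith
    have hG0eq : G 0 = (1-b^2)^2 / (4*b^2*L^2) - 1 := by
      simp only [hGdef, Real.exp_zero]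
      field_simp
      ring
    rw [hG0eq]
    have h4 : (0:ℝ) < 4*b^2*L^2 := by positivity
    have := (one_lt_div h4).mpr hsq
    linarith
  have hGT : G (-2*L) = 0 := by
    have hE : Real.exp (-2*L) = (b^2)⁻¹ := by
      rw [show (-2*L : ℝ) = -(2*L) by ring, Real.exp_neg, hb2]
    simp only [hGdef, hE]
    field_simp
    ring
  -- final sign change for G
  obtain ⟨β, hβmem, hβzero, hβneg, hβpos⟩ :=
    my_sign_change (f := fun t => -(G t)) htm0 htmT
      (hcontG.neg.continuousOn)
      (fun x hx y hy hxy => neg_lt_neg (hGanti hx hy hxy))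
      (fun x hx y hy hxy => neg_lt_neg (hGmono hx hy hxy))
      (neg_lt_zero.mpr hG0) (show -(G (-2*L)) = 0 by rw [hGT, neg_zero])
  have hβzero' : G β = 0 := neg_eq_zero.mp hβzero
  have hβT : β < -2*L := hβmem.2.trans htmT
  have hGpos : ∀ t ∈ Ico (0:ℝ) β, 0 < G t := by
    intro t ht
    have := hβneg t ht
    simp only [neg_lt, neg_zero] at this
    exact this
  have hGneg : ∀ t ∈ Ioo β (-2*L), G t < 0 := by
    intro t ht
    have := hβpos t ht
    simp only [lt_neg, neg_zero] at this
    exact this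
  refine ⟨β, ⟨hβmem.1, hβT⟩, hβzero', ?_, ?_, ?_⟩
  · intro β' hβ' h0
    rcases lt_trichotomy β' β with h | h | h
    · exact absurd h0 (ne_of_gt (hGpos β' ⟨hβ'.1.le, h⟩))
    · exact h
    · exact absurd h0 (ne_of_lt (hGneg β' ⟨h, hβ'.2⟩))
  · intro t ht
    exact hGpos t ht
  · intro t ht
    exact hGneg t ht
end

section
/- Let a₁, a₂ ∈ ℂ with a₁ ≠ 0, α₀ ∈ 𝔻 (the open unit disc), α₂ ∈ 𝔻̄ satisfy α₀ = |a₁|²·0 + |a₂|²α₂ and 1 + |α₀|² = |a₁|² + |a₂|²(1 + |α₂|²) (i.e. equations (3)-(4) with α₁ = 0). Then for all λ on the unit circle, (1 - conj(α₀)λ) - a₂(λ - α₂) ≠ 0. -/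
theorem stmt_8 (a₁ a₂ α₀ α₂ : ℂ) (ha₁ : a₁ ≠ 0) (ha₂ : a₂ ≠ 0)
    (hα₀ : ‖α₀‖ < 1) (hα₂ : ‖α₂‖ ≤ 1)
    (heq1 : α₀ = (‖a₁‖ : ℂ) ^ 2 * 0 + (‖a₂‖ : ℂ) ^ 2 * α₂)
    (heq2 : 1 + ‖α₀‖ ^ 2
      = ‖a₁‖ ^ 2 + ‖a₂‖ ^ 2 * (1 + ‖α₂‖ ^ 2)) :
    ∀ lam : ℂ, ‖lam‖ = 1 →
      (1 - (starRingEnd ℂ) α₀ * lam) - a₂ * (lam - α₂) ≠ 0 := by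
  intro lam hlam hzero
  have hlm : Complex.normSq lam = 1 := by rw [← Complex.sq_norm, hlam]; norm_num
  have hα₀' : α₀ = ((‖a₂‖ : ℂ) ^ 2) * α₂ := by rw [heq1]; ring
  have h : 1 - (starRingEnd ℂ) α₀ * lam = a₂ * (lam - α₂) := by linear_combination hzero
  have hns := congrArg Complex.normSq h
  simp only [Complex.normSq_sub, Complex.normSq_mul, Complex.normSq_conj,
    Complex.normSq_one, hlm] at hns
  have hre : (1 * (starRingEnd ℂ) ((starRingEnd ℂ) α₀ * lam)).re
      = (‖a₂‖) ^ 2 * (lam * (starRingEnd ℂ) α₂).re := by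
    rw [hα₀']
    simp [Complex.mul_re, Complex.mul_im, ← Complex.ofReal_pow]
    ring
  rw [hre] at hns
  rw [← Complex.sq_norm α₀, ← Complex.sq_norm α₂, ← Complex.sq_norm a₂] at hns
  have ha₁' : 0 < ‖a₁‖ ^ 2 := pow_pos (norm_pos_iff.mpr ha₁) 2
  nlinarith [hns, heq2, ha₁']
end

section
/- For every b ∈ (0,1) and real v with v ≥ 4b², the function h(t) = (b⁴t²eᵗ + (1 - b²eᵗ)²e^{-t}) / (t(1 - b²eᵗ)) - (v - 2b²) has a zero t = α in the open interval (0, -2 ln b). -/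
open Real Set

set_option maxHeartbeats 1000000 in

theorem stmt_11 (b v : ℝ) (hb0 : 0 < b) (hb1 : b < 1) (hv : v ≥ 4 * b ^ 2) :
    ∃ α ∈ Set.Ioo (0 : ℝ) (-2 * Real.log b),
      (b ^ 4 * α ^ 2 * Real.exp α + (1 - b ^ 2 * Real.exp α) ^ 2 * Real.exp (-α)) /
          (α * (1 - b ^ 2 * Real.exp α))
        = v - 2 * b ^ 2 := by
  set L : ℝ := -2 * Real.log b with hLdef
  have hlogb : Real.log b < 0 := Real.log_neg hb0 hb1
  have hL : 0 < L := by rw [hLdef]; linarith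
  have hb2 : (0:ℝ) < b ^ 2 := by positivity
  have hexpL : b ^ 2 * Real.exp L = 1 := by
    have h1 : b ^ 2 * Real.exp L = Real.exp (Real.log (b ^ 2) + L) := by
      rw [Real.exp_add, Real.exp_log (by positivity)]
    rw [h1, Real.log_pow]
    have : ((2:ℕ):ℝ) * Real.log b + L = 0 := by rw [hLdef]; push_cast; ring
    rw [this, Real.exp_zero]
  -- find t₀ ∈ (0, L) with b² t₀ e^{t₀} = 1 - b² e^{t₀}
  set g : ℝ → ℝ := fun t => b ^ 2 * t * Real.exp t - (1 - b ^ 2 * Real.exp t) with hgdef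
  have hgcont : Continuous g := by fun_prop
  have hg0 : g 0 < 0 := by
    simp only [hgdef, Real.exp_zero]
    nlinarith
  have hgL : 0 < g L := by
    simp only [hgdef]
    have : b ^ 2 * L * Real.exp L = L * (b ^ 2 * Real.exp L) := by ring
    rw [this, hexpL]
    nlinarith
  have hsub := intermediate_value_Ioo (le_of_lt hL) hgcont.continuousOn
  obtain ⟨t₀, ht₀mem, ht₀⟩ := hsub ⟨hg0, hgL⟩
  obtain ⟨ht₀0, ht₀L⟩ := ht₀mem
  have hkey : 1 - b ^ 2 * Real.exp t₀ = b ^ 2 * t₀ * Real.exp t₀ := by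
    simp only [hgdef] at ht₀; linarith
  have hP : 0 < b ^ 2 * t₀ * Real.exp t₀ := by positivity
  have hv2 : 0 < v - 2 * b ^ 2 := by nlinarith
  -- h t₀ = 2 b²
  set h : ℝ → ℝ := fun t =>
    (b ^ 4 * t ^ 2 * Real.exp t + (1 - b ^ 2 * Real.exp t) ^ 2 * Real.exp (-t)) /
      (t * (1 - b ^ 2 * Real.exp t)) with hhdef
  have hexppos : ∀ x : ℝ, 0 < Real.exp x := fun x => Real.exp_pos x
  have hht₀ : h t₀ = 2 * b ^ 2 := by
    simp only [hhdef, hkey]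
    rw [Real.exp_neg]
    rw [div_eq_iff (by positivity)]
    field_simp
    ring
  -- choose t₁
  set ε : ℝ := b ^ 4 * t₀ * Real.exp t₀ / (v - 2 * b ^ 2) with hεdef
  have hεpos : 0 < ε := by positivity
  set δ : ℝ := min ε (L - t₀) with hδdef
  have hδpos : 0 < δ := lt_min hεpos (by linarith)
  set t₁ : ℝ := L - δ / 2 with ht₁def
  have ht₁L : t₁ < L := by rw [ht₁def]; linarith
  have ht₀t₁ : t₀ < t₁ := by
    have : δ ≤ L - t₀ := min_le_right _ _
    rw [ht₁def]; linarith
  have ht₁pos : 0 < t₁ := lt_trans ht₀0 ht₀t₁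
  have hq1 : b ^ 2 * Real.exp t₁ = Real.exp (-(δ / 2)) := by
    rw [show t₁ = L + -(δ / 2) by rw [ht₁def]; ring, Real.exp_add, ← mul_assoc, hexpL, one_mul]
  have hqpos : 0 < 1 - b ^ 2 * Real.exp t₁ := by
    rw [hq1]
    have : Real.exp (-(δ / 2)) < Real.exp 0 := Real.exp_lt_exp.mpr (by linarith)
    rw [Real.exp_zero] at this; linarith
  have hqle : 1 - b ^ 2 * Real.exp t₁ ≤ δ / 2 := by
    rw [hq1]
    have := Real.add_one_le_exp (-(δ / 2))
    linarith
  have hqε : 1 - b ^ 2 * Real.exp t₁ ≤ ε := by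
    have : δ ≤ ε := min_le_left _ _
    linarith
  clear_value ε δ t₁
  -- positivity of factor along Icc
  have hposden : ∀ t ∈ Icc t₀ t₁, 0 < 1 - b ^ 2 * Real.exp t := by
    intro t ht
    have : Real.exp t ≤ Real.exp t₁ := Real.exp_le_exp.mpr ht.2
    nlinarith
  -- continuity of h on Icc t₀ t₁
  have hcont : ContinuousOn h (Icc t₀ t₁) := by
    apply ContinuousOn.div (by fun_prop) (by fun_prop)
    intro t ht
    have h1 := hposden t ht
    have h2 : 0 < t := lt_of_lt_of_le ht₀0 ht.1
    positivity
  clear_value g h L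
  -- h t₁ ≥ v - 2b²
  have hht₁ : v - 2 * b ^ 2 ≤ h t₁ := by
    simp only [hhdef]
    rw [le_div_iff₀ (by have := hqpos; positivity)]
    have hmono : b ^ 4 * t₀ * Real.exp t₀ ≤ b ^ 4 * t₁ * Real.exp t₁ := by
      have h1 : Real.exp t₀ ≤ Real.exp t₁ := Real.exp_le_exp.mpr (le_of_lt ht₀t₁)
      have h2 : t₀ * Real.exp t₀ ≤ t₁ * Real.exp t₁ :=
        mul_le_mul (le_of_lt ht₀t₁) h1 (Real.exp_pos t₀).le (le_of_lt ht₁pos)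
      nlinarith [mul_nonneg (pow_pos hb0 4).le (sub_nonneg.mpr h2)]
    have hεq : (v - 2 * b ^ 2) * ε = b ^ 4 * t₀ * Real.exp t₀ := by
      rw [hεdef]; field_simp
    have h2 : (v - 2 * b ^ 2) * (1 - b ^ 2 * Real.exp t₁) ≤ b ^ 4 * t₁ * Real.exp t₁ := by
      calc (v - 2 * b ^ 2) * (1 - b ^ 2 * Real.exp t₁) ≤ (v - 2 * b ^ 2) * ε := by
            exact mul_le_mul_of_nonneg_left hqε (le_of_lt hv2)
        _ = b ^ 4 * t₀ * Real.exp t₀ := hεq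
        _ ≤ b ^ 4 * t₁ * Real.exp t₁ := hmono
    have h3 : 0 ≤ (1 - b ^ 2 * Real.exp t₁) ^ 2 * Real.exp (-t₁) := by positivity
    have h4 : (v - 2 * b ^ 2) * (t₁ * (1 - b ^ 2 * Real.exp t₁)) ≤ b ^ 4 * t₁ ^ 2 * Real.exp t₁ := by
      nlinarith [mul_le_mul_of_nonneg_left h2 (le_of_lt ht₁pos)]
    linarith
  -- IVT
  have hsub2 := intermediate_value_Icc (le_of_lt ht₀t₁) hcont
  have hmem : v - 2 * b ^ 2 ∈ Icc (h t₀) (h t₁) := ⟨by rw [hht₀]; linarith, hht₁⟩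
  obtain ⟨α, hαmem, hα⟩ := hsub2 hmem
  refine ⟨α, ⟨lt_of_lt_of_le ht₀0 hαmem.1, lt_of_le_of_lt hαmem.2 ht₁L⟩, ?_⟩
  simp only [hhdef] at hα
  exact hα
end

section
/- For 0 < b < 1 and Y ∈ ℂ, the Kobayashi pseudometric of D_{1,1} satisfies K_{D_{1,1}}((0,b),(0,Y))² = |Y|²/(1-b²) + b²|Y|²/(1-b²)². -/
/-- The Kobayashi pseudometric of a domain `D` in a complex normed space. -/
noncomputable def kobayashiPseudometric {E : Type*} [NormedAddCommGroup E] [NormedSpace ℂ E]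
    (D : Set E) (z ζ : E) : ℝ :=
  sInf {r : ℝ | ∃ (α : ℂ) (f : ℂ → E), r = ‖α‖ ∧
    DifferentiableOn ℂ f (Metric.ball (0 : ℂ) 1) ∧
    Set.MapsTo f (Metric.ball (0 : ℂ) 1) D ∧ f 0 = z ∧ α • deriv f 0 = ζ}

/-- The Fock-Bargmann-Hartogs domain `D_{1,1}`. -/
def FBH11 : Set (ℂ × ℂ) :=
  {p : ℂ × ℂ | ‖p.2‖ ^ 2 < Real.exp (-(‖p.1‖ ^ 2))}

lemma aut_normSq (c : ℝ) (w : ℂ) :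
    Complex.normSq (1 + (c : ℂ) * w) - Complex.normSq ((c : ℂ) + w)
      = (1 - c ^ 2) * (1 - Complex.normSq w) := by
  simp [Complex.normSq_apply, Complex.add_re, Complex.add_im, Complex.mul_re, Complex.mul_im,
    Complex.ofReal_re, Complex.ofReal_im]
  ring

lemma aut_ne (c : ℝ) (hc : c ^ 2 < 1) (w : ℂ) (hw : ‖w‖ < 1) :
    (1 : ℂ) + (c : ℂ) * w ≠ 0 := by
  intro h
  have h1 : Complex.normSq w < 1 := by
    have := Complex.sq_norm w
    nlinarith [norm_nonneg w]
  have h2 := aut_normSq c w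
  rw [h, Complex.normSq_zero] at h2
  nlinarith [Complex.normSq_nonneg ((c : ℂ) + w)]

lemma aut_mem (c : ℝ) (hc : c ^ 2 < 1) (w : ℂ) (hw : ‖w‖ < 1) :
    ‖((c : ℂ) + w) / (1 + (c : ℂ) * w)‖ < 1 := by
  have h1 : Complex.normSq w < 1 := by
    have := Complex.sq_norm w
    nlinarith [norm_nonneg w]
  have h2 := aut_normSq c w
  have h3 : Complex.normSq ((c : ℂ) + w) < Complex.normSq (1 + (c : ℂ) * w) := by nlinarith
  have h4 : ‖(c : ℂ) + w‖ < ‖1 + (c : ℂ) * w‖ := by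
    rw [Complex.norm_def, Complex.norm_def]
    exact Real.sqrt_lt_sqrt (Complex.normSq_nonneg _) h3
  have h5 : 0 < ‖1 + (c : ℂ) * w‖ :=
    lt_of_le_of_lt (norm_nonneg _) h4
  rw [norm_div]
  exact (div_lt_one h5).mpr h4

lemma kob_eq (b : ℝ) (hb0 : 0 < b) (hb1 : b < 1) (Y : ℂ) :
    kobayashiPseudometric FBH11 ((0 : ℂ), (b : ℂ)) ((0 : ℂ), Y)
      = ‖Y‖ / (1 - b ^ 2) := by
  have hb2 : b ^ 2 < 1 := by nlinarith
  have hb2' : (0 : ℝ) < 1 - b ^ 2 := by linarith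
  have hcast : ((1 : ℂ) - (b : ℂ) ^ 2) = ((1 - b ^ 2 : ℝ) : ℂ) := by push_cast; ring
  have hb2c : ((1 : ℂ) - (b : ℂ) ^ 2) ≠ 0 := by
    rw [hcast]
    exact_mod_cast hb2'.ne'
  set c : ℝ := ‖Y‖ / (1 - b ^ 2) with hc
  -- membership of c in the defining set
  have hmem : c ∈ {r : ℝ | ∃ (α : ℂ) (f : ℂ → ℂ × ℂ), r = ‖α‖ ∧
      DifferentiableOn ℂ f (Metric.ball (0 : ℂ) 1) ∧
      Set.MapsTo f (Metric.ball (0 : ℂ) 1) FBH11 ∧ f 0 = ((0 : ℂ), (b : ℂ)) ∧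
      α • deriv f 0 = ((0 : ℂ), Y)} := by
    refine ⟨Y / ((1 : ℂ) - (b : ℂ) ^ 2),
      fun t => ((0 : ℂ), ((b : ℂ) + t) / (1 + (b : ℂ) * t)), ?_, ?_, ?_, ?_, ?_⟩
    · rw [norm_div, hcast, Complex.norm_of_nonneg hb2'.le]
    · refine DifferentiableOn.prodMk (differentiableOn_const _) ?_
      refine DifferentiableOn.div ((differentiableOn_id).const_add _)
        ((differentiableOn_id.const_mul _).const_add 1) ?_
      intro t ht
      exact aut_ne b hb2 t (mem_ball_zero_iff.mp ht)
    · intro t ht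
      have haut := aut_mem b hb2 t (mem_ball_zero_iff.mp ht)
      show ‖((b : ℂ) + t) / (1 + (b : ℂ) * t)‖ ^ 2
        < Real.exp (-(‖(0 : ℂ)‖ ^ 2))
      rw [norm_zero, show -((0:ℝ) ^ 2) = 0 by norm_num, Real.exp_zero]
      nlinarith [norm_nonneg (((b : ℂ) + t) / (1 + (b : ℂ) * t))]
    · simp
    · have hu : HasDerivAt (fun t : ℂ => (b : ℂ) + t) 1 0 := (hasDerivAt_id 0).const_add _
      have hv : HasDerivAt (fun t : ℂ => 1 + (b : ℂ) * t) (b : ℂ) 0 := by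
        simpa using ((hasDerivAt_id 0).const_mul (b : ℂ)).const_add 1
      have hne : (1 : ℂ) + (b : ℂ) * 0 ≠ 0 := by simp
      have hq := hu.div hv hne
      have hq' : HasDerivAt (fun t : ℂ => ((b : ℂ) + t) / (1 + (b : ℂ) * t))
          ((1 : ℂ) - (b : ℂ) ^ 2) 0 := by
        refine hq.congr_deriv ?_
        simp only [mul_zero, add_zero, one_pow, div_one, one_mul]
        ring
      have hF : HasDerivAt (fun t : ℂ => ((0 : ℂ), ((b : ℂ) + t) / (1 + (b : ℂ) * t)))
          (((0 : ℂ), (1 : ℂ) - (b : ℂ) ^ 2) : ℂ × ℂ) 0 := (hasDerivAt_const (x := (0 : ℂ)) (c := (0 : ℂ))).prodMk hq'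
      rw [hF.deriv]
      ext
      · simp
      · simp [div_mul_cancel₀ _ hb2c]
  have hlb : ∀ r ∈ {r : ℝ | ∃ (α : ℂ) (f : ℂ → ℂ × ℂ), r = ‖α‖ ∧
      DifferentiableOn ℂ f (Metric.ball (0 : ℂ) 1) ∧
      Set.MapsTo f (Metric.ball (0 : ℂ) 1) FBH11 ∧ f 0 = ((0 : ℂ), (b : ℂ)) ∧
      α • deriv f 0 = ((0 : ℂ), Y)}, c ≤ r := by
    rintro r ⟨α, f, rfl, hd, hm, h0, hder⟩
    set g : ℂ → ℂ := fun t => (f t).2 with hg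
    have hgd : DifferentiableOn ℂ g (Metric.ball (0 : ℂ) 1) := hd.snd
    have hg0 : g 0 = (b : ℂ) := by simp [hg, h0]
    have h0mem : (0 : ℂ) ∈ Metric.ball (0 : ℂ) 1 := Metric.mem_ball_self one_pos
    have hfd : DifferentiableAt ℂ f 0 := hd.differentiableAt (Metric.isOpen_ball.mem_nhds h0mem)
    have h1 : HasDerivAt g ((deriv f 0).2) 0 :=
      (ContinuousLinearMap.snd ℂ ℂ ℂ).hasFDerivAt.comp_hasDerivAt 0 hfd.hasDerivAt
    have hαY : α * (deriv f 0).2 = Y := by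
      have := congrArg Prod.snd hder
      simpa using this
    have hg_mem : ∀ t ∈ Metric.ball (0 : ℂ) 1, ‖g t‖ < 1 := by
      intro t ht
      have hmem' := hm ht
      simp only [FBH11, Set.mem_setOf_eq] at hmem'
      have hle : Real.exp (-(‖(f t).1‖ ^ 2)) ≤ 1 := by
        rw [Real.exp_le_one_iff]
        nlinarith [norm_nonneg (f t).1]
      have : ‖g t‖ ^ 2 < 1 := lt_of_lt_of_le hmem' hle
      nlinarith [norm_nonneg (g t)]
    have hnb2 : (-b) ^ 2 < 1 := by rw [neg_sq]; exact hb2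
    set h : ℂ → ℂ := fun t => (((-b : ℝ) : ℂ) + g t) / (1 + ((-b : ℝ) : ℂ) * g t) with hh
    have hdh : DifferentiableOn ℂ h (Metric.ball (0 : ℂ) 1) := by
      refine DifferentiableOn.div (hgd.const_add _) ((hgd.const_mul _).const_add 1) ?_
      intro t ht
      exact aut_ne (-b) hnb2 (g t) (hg_mem t ht)
    have hmaps : Set.MapsTo h (Metric.ball (0 : ℂ) 1) (Metric.ball (0 : ℂ) 1) := by
      intro t ht
      rw [mem_ball_zero_iff]
      exact aut_mem (-b) hnb2 (g t) (hg_mem t ht)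
    have hh0 : h 0 = 0 := by
      simp only [hh, hg0]
      push_cast
      simp
    have hvne : (1 : ℂ) + ((-b : ℝ) : ℂ) * g 0 ≠ 0 := by
      rw [hg0]
      exact aut_ne (-b) hnb2 (b : ℂ) (by rw [Complex.norm_real, Real.norm_eq_abs]; exact abs_lt.mpr ⟨by linarith, hb1⟩)
    have hu : HasDerivAt (fun t : ℂ => ((-b : ℝ) : ℂ) + g t) ((deriv f 0).2) 0 := h1.const_add _
    have hv : HasDerivAt (fun t : ℂ => 1 + ((-b : ℝ) : ℂ) * g t)
        (((-b : ℝ) : ℂ) * (deriv f 0).2) 0 := (h1.const_mul _).const_add 1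
    have hq := hu.div hv hvne
    have hderh : HasDerivAt h ((deriv f 0).2 / ((1 : ℂ) - (b : ℂ) ^ 2)) 0 := by
      have e1 : (1 : ℂ) + ((-b : ℝ) : ℂ) * g 0 = 1 - (b : ℂ) ^ 2 := by
        rw [hg0]; push_cast; ring
      have e2 : ((-b : ℝ) : ℂ) + g 0 = 0 := by rw [hg0]; push_cast; ring
      refine hq.congr_deriv ?_
      rw [e1, e2]
      field_simp [hb2c]
      ring
    have hsch : ‖deriv h 0‖ ≤ 1 :=
      Complex.norm_deriv_le_one_of_mapsTo_ball hdh
        (by rw [hh0]; exact hmaps.mono_right Metric.ball_subset_closedBall) one_pos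
    rw [hderh.deriv, norm_div, hcast, Complex.norm_of_nonneg hb2'.le] at hsch
    have hg'le : ‖(deriv f 0).2‖ ≤ 1 - b ^ 2 := by
      rw [div_le_one hb2'] at hsch
      exact hsch
    have hYle : ‖Y‖ ≤ ‖α‖ * (1 - b ^ 2) := by
      calc ‖Y‖ = ‖α‖ * ‖(deriv f 0).2‖ := by
            rw [← norm_mul, hαY]
        _ ≤ ‖α‖ * (1 - b ^ 2) :=
            mul_le_mul_of_nonneg_left hg'le (norm_nonneg α)
    rw [hc, div_le_iff₀ hb2']
    linarith [hYle]
  exact le_antisymm (csInf_le ⟨c, hlb⟩ hmem) (le_csInf ⟨c, hmem⟩ hlb)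

theorem stmt_13 (b : ℝ) (hb0 : 0 < b) (hb1 : b < 1) (Y : ℂ) :
    kobayashiPseudometric FBH11 ((0 : ℂ), (b : ℂ)) ((0 : ℂ), Y) ^ 2
      = ‖Y‖ ^ 2 / (1 - b ^ 2) + b ^ 2 * ‖Y‖ ^ 2 / (1 - b ^ 2) ^ 2 := by
  have hb2' : (0 : ℝ) < 1 - b ^ 2 := by nlinarith
  rw [kob_eq b hb0 hb1 Y]
  field_simp
  ring
end

section
/- Classical boundary Schwarz lemma: Let f : 𝔻 → 𝔻 be holomorphic on the open unit disc 𝔻 and holomorphic in a neighborhood of z = 1 with f(1) = 1. Then f'(1) is a positive real number and f'(1) ≥ |1 - conj(f(0))|²/(1 - |f(0)|²) > 0. -/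
open Metric Set Filter Complex
open scoped Topology

lemma moebius_id (a w : ℂ) :
    Complex.normSq (1 - (starRingEnd ℂ) a * w) - Complex.normSq (w - a)
      = (1 - Complex.normSq a) * (1 - Complex.normSq w) := by
  simp only [Complex.normSq_apply, Complex.mul_re, Complex.mul_im, Complex.sub_re,
    Complex.sub_im, Complex.one_re, Complex.one_im, Complex.conj_re, Complex.conj_im]
  ring

lemma den_ne {a w : ℂ} (ha : ‖a‖ < 1) (hw : ‖w‖ < 1) :
    1 - (starRingEnd ℂ) a * w ≠ 0 := by
  intro h
  rw [sub_eq_zero] at h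
  have : ‖(starRingEnd ℂ) a * w‖ < 1 := by
    rw [norm_mul, Complex.norm_conj]
    nlinarith [norm_nonneg a, norm_nonneg w]
  rw [← h] at this; simp at this

lemma schwarz_pick_key {f : ℂ → ℂ} (hd : DifferentiableOn ℂ f (ball (0:ℂ) 1))
    (hm : MapsTo f (ball (0:ℂ) 1) (ball (0:ℂ) 1)) {z : ℂ} (hz : z ∈ ball (0:ℂ) 1) :
    (1 - ‖z‖ ^ 2) * ‖1 - (starRingEnd ℂ) (f 0) * f z‖ ^ 2
      ≤ (1 - ‖f 0‖ ^ 2) * (1 - ‖f z‖ ^ 2) := by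
  set a := f 0 with ha_def
  have ha : ‖a‖ < 1 := by
    have := hm (by simp : (0:ℂ) ∈ ball (0:ℂ) 1)
    simpa using this
  have hball : ∀ w : ℂ, w ∈ ball (0:ℂ) 1 → ‖w‖ < 1 := by
    intro w hw; simpa using hw
  set g : ℂ → ℂ := fun z => (f z - a) / (1 - (starRingEnd ℂ) a * f z) with hg_def
  have gdiff : DifferentiableOn ℂ g (ball (0:ℂ) 1) := by
    apply DifferentiableOn.div
    · exact hd.sub_const a
    · exact (differentiableOn_const _).sub ((differentiableOn_const _).mul hd)
    · intro x hx; exact den_ne ha (hball _ (hm hx))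
  have gmaps : MapsTo g (ball (0:ℂ) 1) (ball (0:ℂ) 1) := by
    intro x hx
    have hw := hball _ (hm hx)
    have hne := den_ne ha hw
    have habs : (0:ℝ) < ‖1 - (starRingEnd ℂ) a * f x‖ :=
      norm_pos_iff.mpr hne
    have key := moebius_id a (f x)
    have h1 : Complex.normSq (f x - a) < Complex.normSq (1 - (starRingEnd ℂ) a * f x) := by
      have hp : 0 < (1 - Complex.normSq a) * (1 - Complex.normSq (f x)) := by
        apply mul_pos
        · rw [← Complex.sq_norm]; nlinarith [norm_nonneg a]
        · rw [← Complex.sq_norm]; nlinarith [norm_nonneg (f x)]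
      linarith
    simp only [mem_ball, dist_zero_right, hg_def]
    rw [norm_div, div_lt_one habs]
    have := Complex.sq_norm (f x - a)
    have := Complex.sq_norm (1 - (starRingEnd ℂ) a * f x)
    nlinarith [norm_nonneg (f x - a), habs]
  have g0 : g 0 = 0 := by simp [hg_def, ha_def]
  have hs : ‖g z‖ ≤ ‖z‖ :=
    Complex.norm_le_norm_of_mapsTo_ball gdiff (gmaps.mono_right ball_subset_closedBall) g0 (hball _ hz)
  have hw := hball _ (hm hz)
  have hne := den_ne ha hw
  have habs : (0:ℝ) < ‖1 - (starRingEnd ℂ) a * f z‖ := norm_pos_iff.mpr hne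
  have hs2 : ‖f z - a‖ ≤ ‖z‖ * ‖1 - (starRingEnd ℂ) a * f z‖ := by
    rw [hg_def] at hs
    simp only [norm_div] at hs
    rwa [div_le_iff₀ habs] at hs
  have key := moebius_id a (f z)
  rw [← Complex.sq_norm, ← Complex.sq_norm (f z - a)] at key
  rw [← Complex.sq_norm a, ← Complex.sq_norm (f z)] at key
  nlinarith [norm_nonneg (f z - a), norm_nonneg z, habs.le,
    mul_le_mul hs2 hs2 (norm_nonneg _) (mul_nonneg (norm_nonneg z) habs.le)]

theorem stmt_14 (f : ℂ → ℂ) (U : Set ℂ) (hU : U ∈ nhds (1 : ℂ))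
    (hd : DifferentiableOn ℂ f (Metric.ball (0 : ℂ) 1 ∪ U))
    (hm : Set.MapsTo f (Metric.ball (0 : ℂ) 1) (Metric.ball (0 : ℂ) 1))
    (h1 : f 1 = 1) :
    (deriv f 1).im = 0 ∧
    ‖1 - (starRingEnd ℂ) (f 0)‖ ^ 2 / (1 - ‖f 0‖ ^ 2) > 0 ∧
    (deriv f 1).re ≥ ‖1 - (starRingEnd ℂ) (f 0)‖ ^ 2 / (1 - ‖f 0‖ ^ 2) := by
  have hdball : DifferentiableOn ℂ f (ball (0:ℂ) 1) := hd.mono subset_union_left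
  set a := f 0 with ha_def
  have ha : ‖a‖ < 1 := by
    have := hm (by simp : (0:ℂ) ∈ ball (0:ℂ) 1); simpa using this
  have hA : (0:ℝ) < 1 - ‖a‖ ^ 2 := by nlinarith [norm_nonneg a]
  have hne1 : (1:ℂ) - (starRingEnd ℂ) a ≠ 0 := by
    intro h; rw [sub_eq_zero] at h
    have h2 : ‖(starRingEnd ℂ) a‖ = 1 := by rw [← h]; simp
    rw [Complex.norm_conj] at h2; linarith
  have hcpos : (0:ℝ) < ‖1 - (starRingEnd ℂ) a‖ ^ 2 / (1 - ‖a‖ ^ 2) :=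
    div_pos (pow_pos (norm_pos_iff.mpr hne1) 2) hA
  have hd1 : DifferentiableAt ℂ f 1 :=
    hd.differentiableAt (Filter.mem_of_superset hU subset_union_right)
  -- imaginary part
  obtain ⟨ε, hε, hUb⟩ := Metric.mem_nhds_iff.mp hU
  have hdiff : ∀ z ∈ ball (1:ℂ) ε, DifferentiableAt ℂ f z := fun z hz =>
    hd.differentiableAt (mem_of_superset (Metric.isOpen_ball.mem_nhds hz)
      (hUb.trans subset_union_right))
  have hbound : ∀ z ∈ ball (1:ℂ) ε, ‖z‖ = 1 → ‖f z‖ ≤ 1 := by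
    intro z hz hz1
    have hc : ContinuousAt f z := (hdiff z hz).continuousAt
    have ht : Tendsto (fun r : ℝ => f ((r:ℂ) * z)) (𝓝[<] (1:ℝ)) (𝓝 (f z)) := by
      apply hc.tendsto.comp
      have h2 : Tendsto (fun r : ℝ => (r:ℂ) * z) (𝓝 (1:ℝ)) (𝓝 z) := by
        have := (Complex.continuous_ofReal.tendsto 1).mul_const z
        simpa using this
      exact h2.mono_left nhdsWithin_le_nhds
    have habs : Tendsto (fun r : ℝ => ‖f ((r:ℂ)*z)‖) (𝓝[<] (1:ℝ))
        (𝓝 (‖f z‖)) := (continuous_norm.tendsto _).comp ht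
    apply le_of_tendsto habs
    filter_upwards [Ioo_mem_nhdsLT_of_mem (by norm_num : (1:ℝ) ∈ Ioc (0:ℝ) 1)] with r hr
    have hmem : (r:ℂ)*z ∈ ball (0:ℂ) 1 := by
      simp only [mem_ball, dist_zero_right, norm_mul, Complex.norm_real, Real.norm_eq_abs,
        hz1, mul_one, abs_of_pos hr.1]
      exact hr.2
    have := hm hmem
    simp only [mem_ball, dist_zero_right] at this
    exact this.le
  have hF : HasDerivAt (fun w : ℂ => f (Complex.exp (w * Complex.I))) (deriv f 1 * Complex.I) 0 := by
    have h1' : HasDerivAt (fun w : ℂ => w * Complex.I) Complex.I 0 := by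
      simpa using (hasDerivAt_id (0:ℂ)).mul_const Complex.I
    have h2 : HasDerivAt Complex.exp (Complex.exp ((0:ℂ) * Complex.I)) ((0:ℂ) * Complex.I) :=
      Complex.hasDerivAt_exp _
    have h3 := h2.comp 0 h1'
    have h4 : HasDerivAt f (deriv f 1) (Complex.exp ((0:ℂ)*Complex.I)) := by
      simpa using hd1.hasDerivAt
    have := h4.comp 0 h3
    simpa [Function.comp_def] using this
  have hFr : HasDerivAt (fun θ : ℝ => f (Complex.exp ((θ:ℂ) * Complex.I)))
      (deriv f 1 * Complex.I) 0 := by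
    have := hF.comp_ofReal (z := 0)
    simpa using this
  have hre : HasDerivAt (fun θ : ℝ => (f (Complex.exp ((θ:ℂ)*Complex.I))).re)
      ((deriv f 1 * Complex.I).re) 0 := by
    have := Complex.reCLM.hasFDerivAt.comp_hasDerivAt 0 hFr
    simpa [Function.comp_def] using this
  have hmax : IsLocalMax (fun θ : ℝ => (f (Complex.exp ((θ:ℂ)*Complex.I))).re) 0 := by
    have hcont : Tendsto (fun θ : ℝ => Complex.exp ((θ:ℂ)*Complex.I)) (𝓝 0) (𝓝 1) := by
      have hc : Continuous fun θ : ℝ => Complex.exp ((θ:ℂ)*Complex.I) := by continuity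
      have := hc.tendsto 0
      simpa using this
    have hev : ∀ᶠ θ : ℝ in 𝓝 0, Complex.exp ((θ:ℂ)*Complex.I) ∈ ball (1:ℂ) ε :=
      hcont (Metric.ball_mem_nhds 1 hε)
    filter_upwards [hev] with θ hθ
    have hb := hbound _ hθ (Complex.norm_exp_ofReal_mul_I θ)
    simp only [Complex.ofReal_zero, zero_mul, Complex.exp_zero, h1, Complex.one_re]
    exact (Complex.re_le_norm _).trans hb
  have him : (deriv f 1).im = 0 := by
    have h0 := hmax.hasDerivAt_eq_zero hre
    rw [Complex.mul_I_re] at h0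
    linarith
  refine ⟨him, hcpos, ?_⟩
  -- main inequality via limits along real axis
  have hmapsr : Tendsto (fun r : ℝ => (r:ℂ)) (𝓝[<] (1:ℝ)) (𝓝[≠] (1:ℂ)) := by
    rw [tendsto_nhdsWithin_iff]
    constructor
    · exact (Complex.continuous_ofReal.tendsto 1).mono_left nhdsWithin_le_nhds
    · filter_upwards [self_mem_nhdsWithin] with r hr
      simp only [mem_compl_iff, mem_singleton_iff]
      intro h
      rw [show (1:ℂ) = ((1:ℝ):ℂ) by norm_num, Complex.ofReal_inj] at h
      exact absurd h (ne_of_lt hr)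
  have hslope : Tendsto (fun r : ℝ => ((f r - 1)/((r:ℂ) - 1)).re) (𝓝[<] (1:ℝ))
      (𝓝 ((deriv f 1).re)) := by
    have hs := hasDerivAt_iff_tendsto_slope.mp hd1.hasDerivAt
    have := (Complex.continuous_re.tendsto _).comp (hs.comp hmapsr)
    simp only [Function.comp_def, slope_def_field, h1] at this
    exact this
  have hf1 : Tendsto (fun r : ℝ => f r) (𝓝[<] (1:ℝ)) (𝓝 1) := by
    have h0 : Tendsto (fun r : ℝ => ((r:ℂ))) (𝓝[<] (1:ℝ)) (𝓝 ((1:ℝ):ℂ)) :=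
      (Complex.continuous_ofReal.tendsto 1).mono_left nhdsWithin_le_nhds
    have := hd1.continuousAt.tendsto.comp (by simpa using h0)
    simpa [Function.comp_def, h1] using this
  set c := ‖1 - (starRingEnd ℂ) a‖ ^ 2 / (1 - ‖a‖ ^ 2) with hc_def
  have hG : Tendsto (fun r : ℝ => (1+r) * ‖1 - (starRingEnd ℂ) a * f r‖ ^ 2 /
      ((1 - ‖a‖ ^ 2) * (1 + ‖f r‖))) (𝓝[<] (1:ℝ)) (𝓝 c) := by
    have hB : Tendsto (fun r : ℝ => ‖1 - (starRingEnd ℂ) a * f r‖ ^ 2)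
        (𝓝[<] (1:ℝ)) (𝓝 (‖1 - (starRingEnd ℂ) a‖ ^ 2)) := by
      have hcw : Continuous fun w : ℂ => ‖1 - (starRingEnd ℂ) a * w‖ ^ 2 := by
        continuity
      have := (hcw.tendsto 1).comp hf1
      simpa [Function.comp_def] using this
    have hW : Tendsto (fun r : ℝ => ‖f r‖) (𝓝[<] (1:ℝ)) (𝓝 1) := by
      have := (continuous_norm.tendsto 1).comp hf1
      simpa [Function.comp_def] using this
    have hr1 : Tendsto (fun r : ℝ => (1:ℝ)+r) (𝓝[<] (1:ℝ)) (𝓝 2) := by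
      have h : Tendsto (fun r : ℝ => (1:ℝ)+r) (𝓝 (1:ℝ)) (𝓝 ((1:ℝ)+1)) :=
        Filter.Tendsto.add tendsto_const_nhds tendsto_id
      rw [one_add_one_eq_two] at h
      exact h.mono_left nhdsWithin_le_nhds
    have hnum := hr1.mul hB
    have hden := (tendsto_const_nhds (x := 1 - ‖a‖ ^ 2)).mul
      ((tendsto_const_nhds (x := (1:ℝ))).add hW)
    have hlim := hnum.div hden (by positivity : (1 - ‖a‖ ^ 2) * ((1:ℝ) + 1) ≠ 0)
    convert hlim using 2
    · rfl
    rw [hc_def]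
    field_simp
    ring
  have hev : ∀ᶠ r : ℝ in 𝓝[<] (1:ℝ),
      (1+r) * ‖1 - (starRingEnd ℂ) a * f r‖ ^ 2 /
        ((1 - ‖a‖ ^ 2) * (1 + ‖f r‖))
      ≤ ((f r - 1)/((r:ℂ) - 1)).re := by
    filter_upwards [Ioo_mem_nhdsLT_of_mem (by norm_num : (1:ℝ) ∈ Ioc (0:ℝ) 1)] with r hr
    have hrmem : (r:ℂ) ∈ ball (0:ℂ) 1 := by
      simp only [mem_ball, dist_zero_right, Complex.norm_real, Real.norm_eq_abs,
        abs_of_pos hr.1]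
      exact hr.2
    have hK := schwarz_pick_key hdball hm hrmem
    rw [← ha_def] at hK
    have habsr : ‖(r:ℂ)‖ = r := by
      rw [Complex.norm_real, Real.norm_eq_abs, abs_of_pos hr.1]
    rw [habsr] at hK
    have hWlt : ‖f r‖ < 1 := by
      have := hm hrmem; simpa using this
    have hre2 : 1 - ‖f r‖ ≤ 1 - (f r).re := by
      have := Complex.re_le_norm (f r); linarith
    have hlhs : ((f r - 1)/((r:ℂ) - 1)).re = (1 - (f r).re) / (1 - r) := by
      have hc1 : ((r:ℂ) - 1) = ((r - 1 : ℝ):ℂ) := by push_cast; ring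
      rw [hc1, Complex.div_ofReal_re]
      rw [Complex.sub_re, Complex.one_re]
      rw [show (f r).re - 1 = -(1 - (f r).re) by ring, show r - 1 = -(1-r) by ring,
        neg_div_neg_eq]
    rw [hlhs]
    set B := ‖1 - (starRingEnd ℂ) a * f r‖ ^ 2 with hB_def
    set W := ‖f r‖ with hW_def
    have hBnn : (0:ℝ) ≤ B := by positivity
    have hWnn : (0:ℝ) ≤ W := norm_nonneg _
    rw [div_le_div_iff₀ (by positivity) (by linarith [hr.2] : (0:ℝ) < 1 - r)]
    nlinarith [mul_le_mul_of_nonneg_right hre2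
      (by positivity : (0:ℝ) ≤ (1 - ‖a‖ ^ 2) * (1 + W)), hK, hr.1, hr.2]
  exact le_of_tendsto_of_tendsto hG hslope hev
end
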